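/- arXiv:2305.15095 — 2 statements merged into one kernel-verified Lean document; each statement's English description precedes it below -/
import Mathlib

section
/- Let D_x = Σ_i σ_i ⊗ (Xⁱ − xⁱ) on ℂ² ⊗ H with Xⁱ self-adjoint and x ∈ ℝ³, and suppose Λ ∈ ℂ² ⊗ H is a unit vector with D_x Λ = 0. Then for each i, (1/2)((σ_i ⊗ id) D_x + D_x (σ_i ⊗ id)) = id ⊗ (Xⁱ − xⁱ), and consequently ⟨Λ, (id ⊗ Xⁱ) Λ⟩ = xⁱ. -/
open Matrix

noncomputable section

def pauli : Fin 3 → Matrix (Fin 2) (Fin 2) ℂ :=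
  ![!![0, 1; 1, 0], !![0, -Complex.I; Complex.I, 0], !![1, 0; 0, -1]]

variable {H : Type*} [NormedAddCommGroup H] [InnerProductSpace ℂ H] [CompleteSpace H]

/-- Kronecker product σ ⊗ T as a 2×2 block operator matrix. -/
def kron (σ : Matrix (Fin 2) (Fin 2) ℂ) (T : H →L[ℂ] H) :
    Matrix (Fin 2) (Fin 2) (H →L[ℂ] H) :=
  Matrix.of fun j k => σ j k • T

/-- Action of a 2×2 block operator matrix on ℂ² ⊗ H ≅ H ⊕ H (as an ℓ²-direct sum). -/
def mapp (M : Matrix (Fin 2) (Fin 2) (H →L[ℂ] H)) (v : PiLp 2 fun _ : Fin 2 => H) :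
    PiLp 2 fun _ : Fin 2 => H :=
  WithLp.toLp 2 (fun j => ∑ k, M j k (v k))

set_option linter.unusedSectionVars false

lemma kron_mul (σ τ : Matrix (Fin 2) (Fin 2) ℂ) (T S : H →L[ℂ] H) :
    kron σ T * kron τ S = kron (σ * τ) (T * S) := by
  ext a b
  simp [kron, Matrix.mul_apply, smul_smul, mul_smul_comm, smul_mul_assoc,
    Finset.sum_smul]
  module

lemma kron_add_left (σ τ : Matrix (Fin 2) (Fin 2) ℂ) (T : H →L[ℂ] H) :
    kron (σ + τ) T = kron σ T + kron τ T := by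
  ext a b; simp [kron, add_smul]

lemma kron_smul_left (c : ℂ) (σ : Matrix (Fin 2) (Fin 2) ℂ) (T : H →L[ℂ] H) :
    kron (c • σ) T = c • kron σ T := by
  ext a b; simp [kron, smul_smul]

lemma kron_zero_left (T : H →L[ℂ] H) : kron (0 : Matrix (Fin 2) (Fin 2) ℂ) T = 0 := by
  ext a b; simp [kron]

lemma pauli_anticomm (i j : Fin 3) :
    pauli i * pauli j + pauli j * pauli i = if i = j then (2 : ℂ) • 1 else 0 := by
  fin_cases i <;> fin_cases j <;> ext a b <;> fin_cases a <;> fin_cases b <;>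
    norm_num [pauli, Matrix.mul_apply, Fin.sum_univ_two, Matrix.one_apply,
      Complex.ext_iff, Fin.mk.injEq, Fin.ext_iff]

lemma pauli_conj (m : Fin 3) (j k : Fin 2) :
    starRingEnd ℂ (pauli m j k) = pauli m k j := by
  fin_cases m <;> fin_cases j <;> fin_cases k <;> simp [pauli]

lemma part1 (X : Fin 3 → H →L[ℂ] H) (x : Fin 3 → ℝ) (i : Fin 3) :
    (1 / 2 : ℂ) •
        (kron (pauli i) 1 * (∑ j, kron (pauli j) (X j - (x j : ℂ) • 1))
          + (∑ j, kron (pauli j) (X j - (x j : ℂ) • 1)) * kron (pauli i) 1)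
        = kron 1 (X i - (x i : ℂ) • 1) := by
  rw [Finset.mul_sum, Finset.sum_mul, ← Finset.sum_add_distrib]
  have : ∀ j ∈ Finset.univ, kron (pauli i) 1 * kron (pauli j) (X j - (x j : ℂ) • 1)
      + kron (pauli j) (X j - (x j : ℂ) • 1) * kron (pauli i) 1
      = if j = i then (2 : ℂ) • kron 1 (X i - (x i : ℂ) • 1) else 0 := by
    intro j _
    rw [kron_mul, kron_mul, one_mul, mul_one, ← kron_add_left, pauli_anticomm]
    rcases eq_or_ne i j with h | h
    · subst h; simp [kron_smul_left]
    · simp [h, Ne.symm h, kron_zero_left]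
  rw [Finset.sum_congr rfl this, Finset.sum_ite_eq' Finset.univ i]
  simp [smul_smul]

lemma mapp_mul (M N : Matrix (Fin 2) (Fin 2) (H →L[ℂ] H)) (v : PiLp 2 fun _ : Fin 2 => H) :
    mapp (M * N) v = mapp M (mapp N v) := by
  ext j
  simp only [mapp, Matrix.mul_apply, ContinuousLinearMap.sum_apply,
    ContinuousLinearMap.mul_apply, map_sum]
  exact Finset.sum_comm ..

lemma mapp_add (M N : Matrix (Fin 2) (Fin 2) (H →L[ℂ] H)) (v : PiLp 2 fun _ : Fin 2 => H) :
    mapp (M + N) v = mapp M v + mapp N v := by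
  ext j
  simp [mapp, Finset.sum_add_distrib]

lemma mapp_smul (c : ℂ) (M : Matrix (Fin 2) (Fin 2) (H →L[ℂ] H))
    (v : PiLp 2 fun _ : Fin 2 => H) :
    mapp (c • M) v = c • mapp M v := by
  ext j
  simp [mapp, Finset.smul_sum]

lemma mapp_zero (M : Matrix (Fin 2) (Fin 2) (H →L[ℂ] H)) :
    mapp M (0 : PiLp 2 fun _ : Fin 2 => H) = 0 := by
  ext j
  simp [mapp]

lemma inner_mapp (M : Matrix (Fin 2) (Fin 2) (H →L[ℂ] H))
    (h : ∀ j k, ContinuousLinearMap.adjoint (M j k) = M k j)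
    (v w : PiLp 2 fun _ : Fin 2 => H) :
    (inner ℂ v (mapp M w) : ℂ) = inner ℂ (mapp M v) w := by
  simp only [PiLp.inner_apply, mapp, inner_sum, sum_inner]
  rw [Finset.sum_comm]
  refine Finset.sum_congr rfl fun j _ => Finset.sum_congr rfl fun k _ => ?_
  rw [← h k j, ContinuousLinearMap.adjoint_inner_left]

/-- If Λ is a unit vector with D_x Λ = 0, where
D_x = Σᵢ σᵢ ⊗ (Xⁱ − xⁱ), then (1/2){σᵢ ⊗ id, D_x} = id ⊗ (Xⁱ − xⁱ), and the mean value
of each coordinate observable in Λ is xⁱ: ⟨Λ, (id ⊗ Xⁱ)Λ⟩ = xⁱ. -/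
theorem stmt8 (X : Fin 3 → H →L[ℂ] H) (hX : ∀ i, IsSelfAdjoint (X i)) (x : Fin 3 → ℝ)
    (Λ : PiLp 2 fun _ : Fin 2 => H) (hnorm : ‖Λ‖ = 1)
    (hker : mapp (∑ i, kron (pauli i) (X i - (x i : ℂ) • 1)) Λ = 0) :
    (∀ i, (1 / 2 : ℂ) •
        (kron (pauli i) 1 * (∑ j, kron (pauli j) (X j - (x j : ℂ) • 1))
          + (∑ j, kron (pauli j) (X j - (x j : ℂ) • 1)) * kron (pauli i) 1)
        = kron 1 (X i - (x i : ℂ) • 1)) ∧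
    (∀ i, (inner ℂ Λ (mapp (kron 1 (X i)) Λ) : ℂ) = (x i : ℂ)) := by
  refine ⟨part1 X x, fun i => ?_⟩
  set D : Matrix (Fin 2) (Fin 2) (H →L[ℂ] H) :=
    ∑ j, kron (pauli j) (X j - (x j : ℂ) • 1) with hD
  -- self-adjointness of the entries of D (as a block matrix)
  have hsa : ∀ m, IsSelfAdjoint (X m - (x m : ℂ) • 1) := by
    intro m
    refine (hX m).sub ?_
    rw [_root_.IsSelfAdjoint, star_smul, Complex.star_def, Complex.conj_ofReal, star_one]
  have hadj : ∀ j k, ContinuousLinearMap.adjoint (D j k) = D k j := by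
    intro j k
    simp only [hD, Matrix.sum_apply, kron, Matrix.of_apply, map_sum]
    refine Finset.sum_congr rfl fun m _ => ?_
    rw [← ContinuousLinearMap.star_eq_adjoint, star_smul, (hsa m).star_eq,
      Complex.star_def, pauli_conj]
  -- the key vanishing
  have h0 : (inner ℂ Λ (mapp (kron 1 (X i - (x i : ℂ) • 1)) Λ) : ℂ) = 0 := by
    rw [← part1 X x i, mapp_smul, mapp_add, mapp_mul, mapp_mul, hker, mapp_zero]
    rw [inner_smul_right, inner_add_right]
    have h2 : (inner ℂ Λ (mapp D (mapp (kron (pauli i) 1) Λ)) : ℂ) = 0 := by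
      rw [inner_mapp D hadj, hker]
      simp
    rw [h2]
    simp
  -- unfold kron 1 (X i - x i • 1) as a difference
  have key : mapp (kron 1 (X i - (x i : ℂ) • 1)) Λ
      = mapp (kron 1 (X i)) Λ - (x i : ℂ) • Λ := by
    ext j
    fin_cases j <;>
      simp [mapp, kron, Matrix.one_apply, ite_smul, Fin.sum_univ_two, PiLp.sub_apply,
        PiLp.smul_apply]
  rw [key, inner_sub_right, inner_smul_right] at h0
  have hΛ : (inner ℂ Λ Λ : ℂ) = 1 := by
    rw [inner_self_eq_norm_sq_to_K, hnorm]
    norm_num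
  rw [hΛ, mul_one] at h0
  linear_combination h0

end
end

section
/- Let x ↦ Λ(x) be a differentiable family of unit vectors in ℂ² ⊗ H with D_x Λ(x) = 0 where D_x = Σ_i σ_i ⊗ (Xⁱ − xⁱ). Then for any tangent direction, differentiating the eigenvalue equation gives (Σ_i σ_i dxⁱ ⊗ id) Λ = D_x dΛ, and hence Σ_i ⟨Λ, (σ_i ⊗ id) Λ⟩ dxⁱ = 0: the vector n_x with components n_i = ⟨Λ(x), (σ_i ⊗ id) Λ(x)⟩ is orthogonal to every tangent vector of the eigenmanifold at x. -/
/-!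
Differentiating `D_{x(t)} Λ(t) = 0` along the curve gives
`D_{x(t)} Λ'(t) = Σᵢ ẋⁱ (σᵢ ⊗ 1) Λ(t)`, because `x` enters `D_x` only through `- Σᵢ xⁱ σᵢ ⊗ 1`.
Pairing with `Λ(t)` and moving the Hermitian operator `D_{x(t)}` to the left kills the left-hand
side, since `D_{x(t)} Λ(t) = 0`; what remains is `Σᵢ ẋⁱ ⟨Λ, (σᵢ ⊗ 1) Λ⟩ = 0`.
-/

open Matrix

noncomputable section

variable {H : Type*} [NormedAddCommGroup H] [InnerProductSpace ℂ H]

lemma pauli_isHermitian (i : Fin 3) : (pauli i).IsHermitian := by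
  ext j k
  fin_cases i <;> fin_cases j <;> fin_cases k <;> simp [pauli]

lemma kron_sub (σ : Matrix (Fin 2) (Fin 2) ℂ) (S T : H →L[ℂ] H) :
    kron σ (S - T) = kron σ S - kron σ T := by
  ext j k : 1
  simp [kron, smul_sub]

lemma kron_smul (σ : Matrix (Fin 2) (Fin 2) ℂ) (c : ℂ) (T : H →L[ℂ] H) :
    kron σ (c • T) = c • kron σ T := by
  ext j k : 1
  simp [kron, smul_comm c]

def mappₗ :
    Matrix (Fin 2) (Fin 2) (H →L[ℂ] H) →ₗ[ℂ]
      (PiLp 2 fun _ : Fin 2 => H) →L[ℂ] (PiLp 2 fun _ : Fin 2 => H) where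
  toFun M :=
    { toFun := mapp M
      map_add' u v := by ext j; simp [mapp, Finset.sum_add_distrib]
      map_smul' c v := by ext j; simp [mapp]
      cont := by unfold mapp; fun_prop }
  map_add' M N := by ext v j; simp [mapp, Finset.sum_add_distrib]
  map_smul' c M := by ext v j; simp [mapp]

lemma mappₗ_apply (M : Matrix (Fin 2) (Fin 2) (H →L[ℂ] H)) (v : PiLp 2 fun _ : Fin 2 => H) :
    mappₗ M v = mapp M v :=
  rfl

/-- The block matrix of `D_c = Σᵢ σᵢ ⊗ (Xⁱ − cⁱ)`. -/
def dirac (X : Fin 3 → H →L[ℂ] H) (c : Fin 3 → ℝ) : Matrix (Fin 2) (Fin 2) (H →L[ℂ] H) :=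
  ∑ i, kron (pauli i) (X i - (c i : ℂ) • 1)

lemma dirac_eq (X : Fin 3 → H →L[ℂ] H) (c : Fin 3 → ℝ) :
    dirac X c = ∑ i, kron (pauli i) (X i) - ∑ i, (c i : ℂ) • kron (pauli i) 1 := by
  simp only [dirac, kron_sub, kron_smul, Finset.sum_sub_distrib]

lemma mapp_dirac (X : Fin 3 → H →L[ℂ] H) (c : Fin 3 → ℝ) (v : PiLp 2 fun _ : Fin 2 => H) :
    mapp (dirac X c) v
      = mappₗ (∑ i, kron (pauli i) (X i)) v - ∑ i, (c i : ℂ) • mappₗ (kron (pauli i) 1) v := by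
  rw [← mappₗ_apply, dirac_eq]
  simp only [map_sub, map_sum, map_smul, _root_.sub_apply, FunLike.coe_sum, Finset.sum_apply,
    _root_.smul_apply]

lemma hasDerivAt_mapp_dirac (X : Fin 3 → H →L[ℂ] H) {x : ℝ → Fin 3 → ℝ}
    {Λ : ℝ → PiLp 2 fun _ : Fin 2 => H} {t : ℝ} {x' : Fin 3 → ℝ} {Λ' : PiLp 2 fun _ : Fin 2 => H}
    (hx : ∀ i, HasDerivAt (fun s => x s i) (x' i) t) (hΛ : HasDerivAt Λ Λ' t) :
    HasDerivAt (fun s => mapp (dirac X (x s)) (Λ s))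
      (mapp (dirac X (x t)) Λ' - ∑ i, (x' i : ℂ) • mapp (kron (pauli i) 1) (Λ t)) t := by
  have hL : ∀ M, HasDerivAt (fun s => mappₗ M (Λ s)) (mappₗ M Λ') t := fun M =>
    ((mappₗ M).restrictScalars ℝ).hasFDerivAt.comp_hasDerivAt t hΛ
  have hK : HasDerivAt (fun s => ∑ i, (x s i : ℂ) • mappₗ (kron (pauli i) 1) (Λ s))
      (∑ i, ((x t i : ℂ) • mappₗ (kron (pauli i) 1) Λ'
        + (x' i : ℂ) • mappₗ (kron (pauli i) 1) (Λ t))) t :=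
    HasDerivAt.fun_sum fun i _ => (hx i).ofReal_comp.smul (hL (kron (pauli i) 1))
  simp only [mapp_dirac]
  refine ((hL _).fun_sub hK).congr_deriv ?_
  simp only [mappₗ_apply, Finset.sum_add_distrib]
  abel

variable [CompleteSpace H]

lemma isHermitian_kron {σ : Matrix (Fin 2) (Fin 2) ℂ} (hσ : σ.IsHermitian)
    {T : H →L[ℂ] H} (hT : IsSelfAdjoint T) : (kron σ T).IsHermitian := by
  ext j k : 1
  simp [kron, star_smul, hσ.apply, hT.star_eq]

lemma inner_mapp_of_isHermitian {M : Matrix (Fin 2) (Fin 2) (H →L[ℂ] H)}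
    (hM : M.IsHermitian) (u v : PiLp 2 fun _ : Fin 2 => H) :
    inner ℂ (mapp M u) v = inner ℂ u (mapp M v) := by
  simp only [mapp, PiLp.inner_apply, sum_inner, inner_sum]
  rw [Finset.sum_comm]
  refine Finset.sum_congr rfl fun k _ => Finset.sum_congr rfl fun j _ => ?_
  rw [← hM.apply k j, ContinuousLinearMap.star_eq_adjoint, ContinuousLinearMap.adjoint_inner_right]

lemma isHermitian_dirac {X : Fin 3 → H →L[ℂ] H} (hX : ∀ i, IsSelfAdjoint (X i))
    (c : Fin 3 → ℝ) : (dirac X c).IsHermitian := by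
  have hc : ∀ i, IsSelfAdjoint (c i : ℂ) := fun i => Complex.conj_ofReal (c i)
  refine isHermitian_iff_isSelfAdjoint.mpr (isSelfAdjoint_sum _ fun i _ => ?_)
  exact isHermitian_kron (pauli_isHermitian i) ((hX i).sub ((hc i).smul (.one _)))

theorem stmt9_general (X : Fin 3 → H →L[ℂ] H) (hX : ∀ i, IsSelfAdjoint (X i))
    (x : ℝ → Fin 3 → ℝ) (Λ : ℝ → PiLp 2 fun _ : Fin 2 => H)
    (t : ℝ) (x' : Fin 3 → ℝ) (Λ' : PiLp 2 fun _ : Fin 2 => H)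
    (hx : ∀ i, HasDerivAt (fun s => x s i) (x' i) t)
    (hΛ : HasDerivAt Λ Λ' t)
    (hker : ∀ s, mapp (∑ i, kron (pauli i) (X i - (x s i : ℂ) • 1)) (Λ s) = 0) :
    ∑ i, (inner ℂ (Λ t) (mapp (kron (pauli i) 1) (Λ t)) : ℂ) * (x' i : ℂ) = 0 := by
  have hderiv := hasDerivAt_mapp_dirac X hx hΛ
  rw [show (fun s => mapp (dirac X (x s)) (Λ s)) = fun _ => 0 from funext hker] at hderiv
  have hzero := congrArg (inner ℂ (Λ t)) (hderiv.unique (hasDerivAt_const t 0))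
  have hpair : inner ℂ (Λ t) (mapp (dirac X (x t)) Λ') = 0 := by
    rw [← inner_mapp_of_isHermitian (isHermitian_dirac hX _),
      show mapp (dirac X (x t)) (Λ t) = 0 from hker t, inner_zero_left]
  rw [inner_sub_right, hpair, inner_sum, inner_zero_right, zero_sub, neg_eq_zero] at hzero
  simpa only [inner_smul_right, mul_comm] using hzero

/-- Along a differentiable curve t ↦ x(t) in the eigenmanifold with a
differentiable lift of unit kernel vectors Λ(x(t)) of D_x = Σᵢ σᵢ ⊗ (Xⁱ − xⁱ), the
purity normal vector n with nᵢ = ⟨Λ, (σᵢ ⊗ id)Λ⟩ is orthogonal to the velocity: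
Σᵢ nᵢ ẋⁱ = 0. -/
theorem stmt9 (X : Fin 3 → H →L[ℂ] H) (hX : ∀ i, IsSelfAdjoint (X i))
    (x : ℝ → Fin 3 → ℝ) (Λ : ℝ → PiLp 2 fun _ : Fin 2 => H)
    (t : ℝ) (x' : Fin 3 → ℝ) (Λ' : PiLp 2 fun _ : Fin 2 => H)
    (hx : ∀ i, HasDerivAt (fun s => x s i) (x' i) t)
    (hΛ : HasDerivAt Λ Λ' t)
    (hnorm : ∀ s, ‖Λ s‖ = 1)
    (hker : ∀ s, mapp (∑ i, kron (pauli i) (X i - (x s i : ℂ) • 1)) (Λ s) = 0) :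
    ∑ i, (inner ℂ (Λ t) (mapp (kron (pauli i) 1) (Λ t)) : ℂ) * (x' i : ℂ) = 0 :=
  stmt9_general X hX x Λ t x' Λ' hx hΛ hker

end
end
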